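/- arXiv:0902.0306 — 7 statements merged into one kernel-verified Lean document; each statement's English description precedes it below -/
import Mathlib

section
/- Let (S, F, μ, ≺) be an ordered probability space, i.e., a probability space equipped with a strict partial order ≺ such that {(x,y) : x ≺ y} is measurable in the product σ-field. Define g(x) := μ{z ∈ S : z ≺ x}. Then the set {(x,y) ∈ S² : x ≺ y and g(x) ≥ g(y)} is a null set for the product measure μ × μ. -/
/-!
Fix `y` and let `B = {x ≺ y | g y ≤ g x}`. For `x ∈ B` the set `{z ≺ x}` lies inside `{z ≺ y}` and
has the same (finite) measure, so almost every `z ∈ B` satisfies `z ≺ x`. By Fubini, almost every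
pair of `B × B` is then related in both directions, which asymmetry forbids unless `μ B = 0`.
Integrating `μ B` over `y` gives the theorem.
-/

open MeasureTheory

namespace MeasureTheory

variable {α : Type*} [MeasurableSpace α] {μ : Measure α} {r : α → α → Prop}

theorem measurable_measure_setOf_rel [SFinite μ] (hr : MeasurableSet {p : α × α | r p.1 p.2}) :
    Measurable fun x => μ {z | r z x} :=
  measurable_measure_prodMk_right hr

theorem measure_eq_zero_of_ae_ae_rel [SFinite μ] (hasymm : ∀ ⦃a b⦄, r a b → ¬ r b a)
    (hr : MeasurableSet {p : α × α | r p.1 p.2}) {s : Set α} (hs : MeasurableSet s)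
    (h : ∀ᵐ x ∂μ, x ∈ s → ∀ᵐ z ∂μ, z ∈ s → r z x) : μ s = 0 := by
  have h' : ∀ᵐ x ∂μ, ∀ᵐ z ∂μ, x ∈ s → z ∈ s → r z x :=
    h.mono fun _ hx => Filter.eventually_imp_distrib_left.2 hx
  have hcomm : ∀ᵐ z ∂μ, ∀ᵐ x ∂μ, x ∈ s → z ∈ s → r z x :=
    (Measure.ae_ae_comm ((hs.preimage measurable_fst).imp
      ((hs.preimage measurable_snd).imp (measurable_swap hr)))).1 h'
  by_contra hpos
  refine hpos (measure_eq_zero_iff_ae_notMem.2 ?_)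
  filter_upwards [h, hcomm] with x hx hx' hxs
  refine hpos (measure_eq_zero_iff_ae_notMem.2 ?_)
  filter_upwards [hx hxs, hx'] with z hzx hxz hzs
  exact hasymm (hzx hzs) (hxz hzs hxs)

theorem ae_rel_of_rel_of_measure_le [IsFiniteMeasure μ]
    (htrans : ∀ ⦃a b c⦄, r a b → r b c → r a c) {x y : α}
    (hx : NullMeasurableSet {z | r z x} μ) (hxy : r x y)
    (hle : μ {z | r z y} ≤ μ {z | r z x}) : ∀ᵐ z ∂μ, r z y → r z x :=
  (ae_eq_of_subset_of_measure_ge (fun _ hz => htrans hz hxy) hle hx (measure_ne_top _ _)).symm.le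

theorem measure_setOf_rel_and_measure_le_eq_zero [IsFiniteMeasure μ]
    (hasymm : ∀ ⦃a b⦄, r a b → ¬ r b a) (htrans : ∀ ⦃a b c⦄, r a b → r b c → r a c)
    (hr : MeasurableSet {p : α × α | r p.1 p.2}) (y : α) :
    μ {x | r x y ∧ μ {z | r z y} ≤ μ {z | r z x}} = 0 := by
  have hsec : ∀ x, MeasurableSet {z | r z x} := fun x =>
    hr.preimage (measurable_id.prodMk measurable_const)
  refine measure_eq_zero_of_ae_ae_rel hasymm hr
    ((hsec y).inter (measurable_measure_setOf_rel hr measurableSet_Ici)) (.of_forall ?_)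
  rintro x ⟨hxy, hle⟩
  filter_upwards [ae_rel_of_rel_of_measure_le htrans (hsec x).nullMeasurableSet hxy hle]
    with z hz hzB using hz hzB.1

end MeasureTheory

/-- On an ordered probability space `(S, μ, ≺)`, with
`g x = μ {z : z ≺ x}`, the set `{(x,y) : x ≺ y ∧ g x ≥ g y}` is
`μ × μ`-null. -/
theorem ordered_prob_space_g_increasing {S : Type*} [MeasurableSpace S]
    (μ : Measure S) [IsProbabilityMeasure μ]
    (r : S → S → Prop) (hirr : Irreflexive r) (htrans : Transitive r)
    (hmeas : MeasurableSet {p : S × S | r p.1 p.2}) :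
    (μ.prod μ) {p : S × S | r p.1 p.2 ∧ μ {z | r z p.2} ≤ μ {z | r z p.1}} = 0 := by
  have hg := measurable_measure_setOf_rel (μ := μ) hmeas
  have hT : MeasurableSet {p : S × S | r p.1 p.2 ∧ μ {z | r z p.2} ≤ μ {z | r z p.1}} :=
    hmeas.inter (measurableSet_le (hg.comp measurable_snd) (hg.comp measurable_fst))
  have hasymm : ∀ ⦃a b⦄, r a b → ¬ r b a := fun a _ hab hba => hirr a (htrans hab hba)
  rw [Measure.prod_apply_symm hT]
  exact (lintegral_congr
    (measure_setOf_rel_and_measure_le_eq_zero hasymm htrans hmeas)).trans lintegral_zero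
end

section
/- Let (S, F, μ, ≺) be an ordered probability space, x ∈ S, D_x := {z : z ≺ x}, and E_x := {z : z ≺ x and μ(D_z) ≥ μ(D_x)}. Then μ(E_x) = 0. -/
open MeasureTheory

/-!
If `z ≺ x` and `μ D_z ≥ μ D_x`, then `D_z ⊆ D_x` forces `D_z = D_x` up to a null set, so almost
every point of `E_x` lies below `z`. Thus almost every pair `(z, w) ∈ E_x × E_x` satisfies both
`w ≺ z` and, by Fubini, `z ≺ w`, which asymmetry forbids unless `E_x` is null.
-/

namespace MeasureTheory

variable {S : Type*} [MeasurableSpace S] {μ : Measure S} {r : S → S → Prop}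

theorem measure_eq_zero_of_forall_ae_rel [SFinite μ] (hasymm : ∀ a b, r a b → ¬ r b a)
    (hr : MeasurableSet {p : S × S | r p.1 p.2}) {E : Set S} (hE : MeasurableSet E)
    (h : ∀ z ∈ E, ∀ᵐ w ∂μ, w ∈ E → r w z) : μ E = 0 := by
  have below : ∀ z, ∀ᵐ w ∂μ, z ∈ E → w ∈ E → r w z := fun z => by
    by_cases hz : z ∈ E
    · filter_upwards [h z hz] with w hw using fun _ => hw
    · exact ae_of_all _ fun _ hz' => absurd hz' hz
  have hpairs : MeasurableSet {p : S × S | p.1 ∈ E → p.2 ∈ E → r p.2 p.1} :=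
    (hE.preimage measurable_fst).imp
      ((hE.preimage measurable_snd).imp (hr.preimage measurable_swap))
  have above : ∀ᵐ w ∂μ, ∀ᵐ z ∂μ, z ∈ E → w ∈ E → r w z :=
    (Measure.ae_ae_comm hpairs).1 (ae_of_all _ below)
  have null_of_mem : ∀ᵐ w ∂μ, w ∈ E → μ E = 0 := by
    filter_upwards [above] with w hw hwE
    refine measure_eq_zero_iff_ae_notMem.2 ?_
    filter_upwards [hw, below w] with z hwz hzw hzE
    exact hasymm w z (hwz hzE hwE) (hzw hwE hzE)
  by_contra hne
  exact hne (measure_eq_zero_iff_ae_notMem.2 (null_of_mem.mono fun _ hw hwE => hne (hw hwE)))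

end MeasureTheory

/-- On an ordered probability space, for any `x`, the set
`E_x = {z : z ≺ x ∧ μ D_z ≥ μ D_x}` (where `D_y = {w : w ≺ y}`) is null. -/
theorem ordered_prob_space_Ex_null {S : Type*} [MeasurableSpace S]
    (μ : Measure S) [IsProbabilityMeasure μ]
    (r : S → S → Prop) (hirr : Irreflexive r) (htrans : Transitive r)
    (hmeas : MeasurableSet {p : S × S | r p.1 p.2})
    (x : S) :
    μ {z | r z x ∧ μ {w | r w x} ≤ μ {w | r w z}} = 0 := by
  have hD : ∀ y, MeasurableSet {w | r w y} := fun _ => hmeas.preimage measurable_prodMk_right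
  have hE : MeasurableSet {z | r z x ∧ μ {w | r w x} ≤ μ {w | r w z}} :=
    (hD x).inter (measurable_measure_prodMk_right hmeas measurableSet_Ici)
  refine measure_eq_zero_of_forall_ae_rel (fun a b hab hba => hirr a (htrans hab hba)) hmeas hE ?_
  rintro z ⟨hzx, hle⟩
  have hDz_ae_eq : {w | r w z} =ᵐ[μ] {w | r w x} :=
    ae_eq_of_subset_of_measure_ge (fun _ hw => htrans hw hzx) hle (hD z).nullMeasurableSet
      (measure_ne_top μ _)
  filter_upwards [hDz_ae_eq.symm.le] with w hw hwE
  exact hw hwE.1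
end

section
/- Let W : [0,1]² → [0,1] be measurable such that every point (x,y) with W(x,y) > 0 is a Lebesgue point of W, and such that W(x₁,x₂)·W(x₂,x₃)·(1 − W(x₁,x₃)) = 0 for Lebesgue-almost every (x₁,x₂,x₃) ∈ [0,1]³, and moreover W(x,y) = 1 whenever (2ε)^{-2}∫∫_{|x'-x|<ε,|y'-y|<ε} W(x',y') dx'dy' → 1 as ε → 0. Then for all x, y, z ∈ [0,1]: W(x,y) > 0 and W(y,z) > 0 imply W(x,z) = 1. -/
/-! Fix `ε > 0` and let `Q(u, v)` be the square of side `2ε` centred at `(u, v)`. Integrating the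
a.e. transitivity of `W` over the middle variable (Fubini) bounds the measure of the part of
`Q(x, z)` where `W ≠ 1` by the measures of the parts of `Q(x, y)` and `Q(y, z)` where `W = 0`;
outside the unit cube one of the first two factors of the triple product vanishes by the support
condition, so this holds for squares meeting the boundary too. By Chebyshev's inequality these measures are at most
`W(x, y)⁻¹` resp. `W(y, z)⁻¹` times the integrals of `|W - W(x, y)|` resp. `|W - W(y, z)|`,
which are `o(ε²)` at Lebesgue points. Hence the averages of `W` over `Q(x, z)` tend to `1`. -/

open MeasureTheory Filter Set Metric Function Topology

namespace MeasureTheory.Measure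

variable {α β γ : Type*} [MeasurableSpace α] [MeasurableSpace β] [MeasurableSpace γ]

theorem prod_prod_setOf_fst_snd_mem (μ : Measure α) (ν : Measure β) (τ : Measure γ) [SFinite μ]
    [SFinite ν] [SFinite τ] (s : Set (α × β)) (u : Set γ) :
    μ.prod (ν.prod τ) {t | (t.1, t.2.1) ∈ s ∧ t.2.2 ∈ u} = μ.prod ν s * τ u := by
  rw [← prodAssoc_prod, MeasurableEquiv.map_apply, ← prod_prod]
  rfl

variable {μ : Measure α} [SFinite μ]

theorem mul_prod_sdiff_le_of_ae_trans {R S T : Set (α × α)}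
    (htrans : ∀ᵐ t ∂μ.prod (μ.prod μ), (t.1, t.2.1) ∈ R → (t.2.1, t.2.2) ∈ S → (t.1, t.2.2) ∈ T)
    (A B C : Set α) :
    μ B * μ.prod μ ((A ×ˢ C) \ T) ≤
      μ.prod μ ((A ×ˢ B) \ R) * μ C + μ A * μ.prod μ ((B ×ˢ C) \ S) := by
  let e : α × α × α ≃ᵐ α × α × α := .prodCongr (.refl α) .prodComm
  have he : MeasurePreserving e (μ.prod (μ.prod μ)) (μ.prod (μ.prod μ)) :=
    (MeasurePreserving.id μ).prod (measurePreserving_swap)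
  calc μ B * μ.prod μ ((A ×ˢ C) \ T)
      = μ.prod (μ.prod μ) {t | (t.1, t.2.2) ∈ (A ×ˢ C) \ T ∧ t.2.1 ∈ B} := by
        rw [show {t : α × α × α | (t.1, t.2.2) ∈ (A ×ˢ C) \ T ∧ t.2.1 ∈ B} =
          e ⁻¹' {t | (t.1, t.2.1) ∈ (A ×ˢ C) \ T ∧ t.2.2 ∈ B} from rfl,
          he.measure_preimage_equiv, prod_prod_setOf_fst_snd_mem, mul_comm]
    _ ≤ μ.prod (μ.prod μ)
          ({t | (t.1, t.2.1) ∈ (A ×ˢ B) \ R ∧ t.2.2 ∈ C} ∪ A ×ˢ ((B ×ˢ C) \ S)) := by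
        refine measure_mono_ae (htrans.mono fun t ht ⟨⟨⟨hA, hC⟩, hT⟩, hB⟩ => ?_)
        by_cases hR : (t.1, t.2.1) ∈ R
        · exact Or.inr ⟨hA, ⟨hB, hC⟩, fun hS => hT (ht hR hS)⟩
        · exact Or.inl ⟨⟨⟨hA, hB⟩, hR⟩, hC⟩
    _ ≤ _ := (measure_union_le _ _).trans_eq (by rw [prod_prod_setOf_fst_snd_mem, prod_prod])

theorem prod_sdiff_le_add_of_ae_trans {R S T : Set (α × α)}
    (htrans : ∀ᵐ t ∂μ.prod (μ.prod μ), (t.1, t.2.1) ∈ R → (t.2.1, t.2.2) ∈ S → (t.1, t.2.2) ∈ T)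
    {A B C : Set α} (hA : μ A = μ B) (hC : μ C = μ B) (hB₀ : μ B ≠ 0) (hB : μ B ≠ ⊤) :
    μ.prod μ ((A ×ˢ C) \ T) ≤ μ.prod μ ((A ×ˢ B) \ R) + μ.prod μ ((B ×ˢ C) \ S) := by
  have h := mul_prod_sdiff_le_of_ae_trans htrans A B C
  rw [hA, hC, mul_comm _ (μ B), ← mul_add] at h
  exact (ENNReal.mul_le_mul_iff_right hB₀ hB).1 h

end MeasureTheory.Measure

section

variable {α : Type*} [MeasurableSpace α] {μ : Measure α} {f : α → ℝ} {s : Set α}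

theorem abs_mul_measureReal_sdiff_support_le_setIntegral (hf : Measurable f) (hs : MeasurableSet s)
    (a : ℝ) (hint : IntegrableOn (fun p => |f p - a|) s μ) :
    |a| * μ.real (s \ support f) ≤ ∫ p in s, |f p - a| ∂μ := by
  calc |a| * μ.real (s \ support f) = ∫ p in s \ support f, |f p - a| ∂μ := by
        rw [setIntegral_congr_fun (hs.diff (measurableSet_support hf))
          (fun p hp => by rw [notMem_support.1 hp.2, zero_sub, abs_neg]),
          setIntegral_const, smul_eq_mul, mul_comm]
    _ ≤ ∫ p in s, |f p - a| ∂μ :=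
        setIntegral_mono_set hint (ae_of_all _ fun _ => abs_nonneg _) sdiff_subset.eventuallyLE

theorem setIntegral_one_sub_le_measureReal_sdiff (hs : MeasurableSet s)
    (hμs : μ s ≠ ⊤) (hf01 : ∀ p, f p ∈ Icc (0 : ℝ) 1) :
    ∫ p in s, (1 - f p) ∂μ ≤ μ.real (s \ f ⁻¹' {1}) := by
  rw [setIntegral_eq_of_subset_of_forall_sdiff_eq_zero hs sdiff_subset
    fun p hp => by rw [show f p = 1 from not_not.1 fun h => hp.2 ⟨hp.1, h⟩, sub_self]]
  calc ∫ p in s \ f ⁻¹' {1}, (1 - f p) ∂μ ≤ ‖∫ p in s \ f ⁻¹' {1}, (1 - f p) ∂μ‖ :=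
        Real.le_norm_self _
    _ ≤ 1 * μ.real (s \ f ⁻¹' {1}) :=
        norm_setIntegral_le_of_norm_le_const ((measure_mono sdiff_subset).trans_lt hμs.lt_top)
          fun p _ => by
            rw [Real.norm_eq_abs, abs_le]; constructor <;> linarith [(hf01 p).1, (hf01 p).2]
    _ = μ.real (s \ f ⁻¹' {1}) := one_mul _

end

theorem volume_real_ball_prod (q : ℝ × ℝ) {ε : ℝ} (hε : 0 ≤ ε) :
    volume.real (ball q ε) = (2 * ε) ^ 2 := by
  rw [← ball_prod_same, measureReal_def, Measure.volume_eq_prod, Measure.prod_prod,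
    Real.volume_ball, Real.volume_ball, ENNReal.toReal_mul, ENNReal.toReal_ofReal (by linarith), sq]

-- `ℝ × ℝ` carries the sup metric, so its balls are the squares of the statement.
theorem zpow_neg_two_mul_setIntegral_square_eq_setAverage (f : ℝ × ℝ → ℝ) (x y ε : ℝ) :
    (2 * ε) ^ (-2 : ℤ) * ∫ p in Ioo (x - ε) (x + ε) ×ˢ Ioo (y - ε) (y + ε), f p =
      ⨍ p in ball (x, y) ε, f p := by
  rw [← Real.ball_eq_Ioo, ← Real.ball_eq_Ioo, ball_prod_same]
  rcases le_or_gt ε 0 with hε | hε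
  · simp [ball_eq_empty.2 hε]
  · rw [setAverage_eq, volume_real_ball_prod _ hε.le, smul_eq_mul, zpow_neg, zpow_ofNat]

section

variable {W : ℝ × ℝ → ℝ}

theorem integrableOn_ball_of_mem_Icc (hW : Measurable W) (hW01 : ∀ p, W p ∈ Icc (0 : ℝ) 1)
    (q : ℝ × ℝ) (ε : ℝ) : IntegrableOn W (ball q ε) :=
  Measure.integrableOn_of_bounded measure_ball_lt_top.ne hW.aestronglyMeasurable
    (ae_of_all _ fun p => by rw [Real.norm_eq_abs, abs_of_nonneg (hW01 p).1]; exact (hW01 p).2)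

theorem setAverage_ball_le_one (hW : Measurable W) (hW01 : ∀ p, W p ∈ Icc (0 : ℝ) 1)
    (q : ℝ × ℝ) {ε : ℝ} (hε : 0 < ε) : ⨍ p in ball q ε, W p ≤ 1 := by
  obtain ⟨p, -, hp⟩ := exists_setAverage_le (measure_ball_pos volume q hε).ne'
    measure_ball_lt_top.ne (integrableOn_ball_of_mem_Icc hW hW01 q ε)
  exact hp.trans (hW01 p).2

theorem one_sub_le_setAverage_ball (hW : Measurable W) (hW01 : ∀ p, W p ∈ Icc (0 : ℝ) 1)
    (htrans : ∀ᵐ t : ℝ × ℝ × ℝ, (t.1, t.2.1) ∈ support W → (t.2.1, t.2.2) ∈ support W →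
      (t.1, t.2.2) ∈ W ⁻¹' {1})
    {a b : ℝ} (ha : 0 < a) (hb : 0 < b) (x y z : ℝ) {ε : ℝ} (hε : 0 < ε) :
    1 - a⁻¹ * (⨍ p in ball (x, y) ε, |W p - a|) - b⁻¹ * (⨍ p in ball (y, z) ε, |W p - b|) ≤
      ⨍ p in ball (x, z) ε, W p := by
  have hfin : ∀ q : ℝ × ℝ, volume (ball q ε) ≠ ⊤ := fun _ => measure_ball_lt_top.ne
  have hint := integrableOn_ball_of_mem_Icc hW hW01 (ε := ε)
  have hdefect : volume.real (ball (x, z) ε \ W ⁻¹' {1}) ≤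
      volume.real (ball (x, y) ε \ support W) + volume.real (ball (y, z) ε \ support W) := by
    have h := Measure.prod_sdiff_le_add_of_ae_trans htrans (A := ball x ε)
      (B := ball y ε) (C := ball z ε) (by simp only [Real.volume_ball])
      (by simp only [Real.volume_ball]) (measure_ball_pos volume y hε).ne' measure_ball_lt_top.ne
    simp only [ball_prod_same, ← Measure.volume_eq_prod] at h
    exact ENNReal.toReal_le_add h (measure_ne_top_of_subset sdiff_subset (hfin _))
      (measure_ne_top_of_subset sdiff_subset (hfin _))
  have hzero_xy := abs_mul_measureReal_sdiff_support_le_setIntegral hW measurableSet_ball a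
    ((hint (x, y)).sub (integrableOn_const (hfin _))).abs
  have hzero_yz := abs_mul_measureReal_sdiff_support_le_setIntegral hW measurableSet_ball b
    ((hint (y, z)).sub (integrableOn_const (hfin _))).abs
  have hgap := setIntegral_one_sub_le_measureReal_sdiff measurableSet_ball (hfin (x, z)) hW01
  rw [abs_of_pos ha, ← le_inv_mul_iff₀ ha] at hzero_xy
  rw [abs_of_pos hb, ← le_inv_mul_iff₀ hb] at hzero_yz
  rw [integral_sub (integrableOn_const (hfin _)).integrable (hint _).integrable, setIntegral_const,
    smul_eq_mul, mul_one, volume_real_ball_prod _ hε.le] at hgap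
  simp only [setAverage_eq, volume_real_ball_prod _ hε.le, smul_eq_mul]
  set I₁ := ∫ p in ball (x, y) ε, |W p - a|
  set I₂ := ∫ p in ball (y, z) ε, |W p - b|
  set J := ∫ p in ball (x, z) ε, W p
  set v := (2 * ε) ^ 2
  have hv : 0 < v := by positivity
  calc 1 - a⁻¹ * (v⁻¹ * I₁) - b⁻¹ * (v⁻¹ * I₂) = v⁻¹ * (v - a⁻¹ * I₁ - b⁻¹ * I₂) := by
        field_simp
    _ ≤ v⁻¹ * J := by gcongr; linarith

end

/-- If every point where `W > 0` is a Lebesgue point of `W`, the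
triple product condition `W(x₁,x₂)W(x₂,x₃)(1 − W(x₁,x₃)) = 0` holds a.e. on
`[0,1]³`, and `W(x,y) = 1` whenever the local averages of `W` at `(x,y)` tend
to 1, then `W(x,y) > 0` and `W(y,z) > 0` imply `W(x,z) = 1` for all
`x, y, z ∈ [0,1]`. -/
theorem kernel_transitivity_from_lebesgue_points
    (W : ℝ × ℝ → ℝ) (hWmeas : Measurable W)
    (hrange : ∀ p, W p ∈ Set.Icc (0 : ℝ) 1)
    (hsupp : ∀ p : ℝ × ℝ, p ∉ Set.Icc (0:ℝ) 1 ×ˢ Set.Icc (0:ℝ) 1 → W p = 0)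
    (hleb : ∀ x y : ℝ, 0 < W (x, y) →
      Tendsto (fun ε : ℝ => (2 * ε) ^ (-2 : ℤ) *
        ∫ p in Set.Ioo (x - ε) (x + ε) ×ˢ Set.Ioo (y - ε) (y + ε),
          |W p - W (x, y)| ∂(volume : Measure (ℝ × ℝ)))
        (nhdsWithin 0 (Set.Ioi 0)) (nhds 0))
    (htriple : ∀ᵐ t ∂(volume : Measure (ℝ × ℝ × ℝ)),
      t ∈ Set.Icc (0:ℝ) 1 ×ˢ (Set.Icc (0:ℝ) 1 ×ˢ Set.Icc (0:ℝ) 1) →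
      W (t.1, t.2.1) * W (t.2.1, t.2.2) * (1 - W (t.1, t.2.2)) = 0)
    (hone : ∀ x y : ℝ,
      Tendsto (fun ε : ℝ => (2 * ε) ^ (-2 : ℤ) *
        ∫ p in Set.Ioo (x - ε) (x + ε) ×ˢ Set.Ioo (y - ε) (y + ε),
          W p ∂(volume : Measure (ℝ × ℝ)))
        (nhdsWithin 0 (Set.Ioi 0)) (nhds 1) → W (x, y) = 1) :
    ∀ x y z : ℝ, x ∈ Set.Icc (0:ℝ) 1 → y ∈ Set.Icc (0:ℝ) 1 →
      z ∈ Set.Icc (0:ℝ) 1 →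
      0 < W (x, y) → 0 < W (y, z) → W (x, z) = 1 := by
  intro x y z _ _ _ hxy hyz
  simp only [zpow_neg_two_mul_setIntegral_square_eq_setAverage] at hleb hone
  have htrans : ∀ᵐ t : ℝ × ℝ × ℝ, (t.1, t.2.1) ∈ support W → (t.2.1, t.2.2) ∈ support W →
      (t.1, t.2.2) ∈ W ⁻¹' {1} := by
    filter_upwards [htriple] with t ht h₁₂ h₂₃
    have hcube : t ∈ Icc 0 1 ×ˢ (Icc 0 1 ×ˢ Icc 0 1) :=
      ⟨(not_not.1 (mt (hsupp _) h₁₂)).1, not_not.1 (mt (hsupp _) h₂₃)⟩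
    exact (sub_eq_zero.1 ((mul_eq_zero.1 (ht hcube)).resolve_left (mul_ne_zero h₁₂ h₂₃))).symm
  apply hone x z
  have hlower : Tendsto (fun ε => 1 - (W (x, y))⁻¹ * (⨍ p in ball (x, y) ε, |W p - W (x, y)|)
      - (W (y, z))⁻¹ * (⨍ p in ball (y, z) ε, |W p - W (y, z)|)) (𝓝[>] 0) (𝓝 1) := by
    simpa using (tendsto_const_nhds.sub ((hleb x y hxy).const_mul _)).sub
      ((hleb y z hyz).const_mul _)
  refine tendsto_of_tendsto_of_tendsto_of_le_of_le' hlower tendsto_const_nhds ?_ ?_ <;>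
    filter_upwards [self_mem_nhdsWithin] with ε hε
  · exact one_sub_le_setAverage_ball hWmeas hrange htrans hxy hyz x y z hε
  · exact setAverage_ball_le_one hWmeas hrange (x, z) hε
end

section
/- Let W : [0,1]² → [0,1] be measurable such that every point (x,y) with W(x,y) > 0 is a Lebesgue point of W, and such that W(x₁,x₂)·W(x₂,x₃)·W(x₃,x₁) = 0 for Lebesgue-almost every (x₁,x₂,x₃) ∈ [0,1]³. Then for all x, y, z ∈ [0,1]: W(x,y) > 0 and W(y,z) > 0 imply W(z,x) = 0. -/
/-!
If `W(x,y)`, `W(y,z)` and `W(z,x)` were all positive, then, these being Lebesgue points, Markov's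
inequality shows that `W` vanishes only on an `o(ε²)` part of the `ε`-squares around `(x,y)`,
`(y,z)` and `(z,x)`. Inside the `ε`-cube around `(x,y,z)`, cut down to `[0,1]³` but still of
volume at least `ε³`, the triples with a vanishing edge then have volume `3 · 2ε · o(ε²)`, so a set
of positive measure of triples has all three edges positive.
-/

open MeasureTheory Filter Set Topology

section Triangles

variable {α : Type*} [MeasurableSpace α] (μ : Measure α) [SFinite μ]

def cycleTriple : α × α × α ≃ᵐ α × α × α :=
  MeasurableEquiv.prodComm.trans MeasurableEquiv.prodAssoc

@[simp]
lemma cycleTriple_apply (t : α × α × α) : cycleTriple t = (t.2.1, t.2.2, t.1) := rfl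

lemma measurePreserving_cycleTriple :
    MeasurePreserving (cycleTriple (α := α)) (μ.prod (μ.prod μ)) (μ.prod (μ.prod μ)) :=
  (measurePreserving_prodAssoc μ μ μ).comp Measure.measurePreserving_swap

lemma measure_prod_le_triangles (U : Set (α × α)) (A B C : Set α) :
    μ.prod (μ.prod μ) (A ×ˢ B ×ˢ C) ≤
      μ.prod (μ.prod μ) {t ∈ A ×ˢ B ×ˢ C | (t.1, t.2.1) ∈ U ∧ (t.2.1, t.2.2) ∈ U ∧ (t.2.2, t.1) ∈ U}
        + μ C * μ.prod μ (A ×ˢ B \ U) + μ A * μ.prod μ (B ×ˢ C \ U)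
        + μ B * μ.prod μ (C ×ˢ A \ U) := by
  -- Each of the three bad sets is a product up to a cyclic relabelling of the coordinates.
  have hcyc := (measurePreserving_cycleTriple μ).measure_preimage_equiv
  calc μ.prod (μ.prod μ) (A ×ˢ B ×ˢ C)
      ≤ μ.prod (μ.prod μ)
          ({t ∈ A ×ˢ B ×ˢ C | (t.1, t.2.1) ∈ U ∧ (t.2.1, t.2.2) ∈ U ∧ (t.2.2, t.1) ∈ U}
            ∪ cycleTriple ⁻¹' (cycleTriple ⁻¹' (C ×ˢ (A ×ˢ B \ U)))
            ∪ A ×ˢ (B ×ˢ C \ U) ∪ cycleTriple ⁻¹' (B ×ˢ (C ×ˢ A \ U))) := by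
        refine measure_mono fun t ⟨ha, hb, hc⟩ => ?_
        simp only [mem_union, mem_ofPred_eq, mem_preimage, cycleTriple_apply, mem_prod,
          Set.mem_sdiff]
        tauto
    _ ≤ _ := by
        refine (measure_union_le _ _).trans (add_le_add ((measure_union_le _ _).trans
          (add_le_add ((measure_union_le _ _).trans (add_le_add le_rfl ?_)) ?_)) ?_) <;>
        simp only [hcyc, Measure.prod_prod, le_rfl]

end Triangles

lemma measure_diff_setOf_pos_le {α : Type*} [MeasurableSpace α] {μ : Measure α} {f : α → ℝ}
    {s : Set α} {a : ℝ} (hf : IntegrableOn f s μ) (hs : μ s ≠ ⊤) (ha : 0 < a) :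
    ENNReal.ofReal a * μ (s \ {p | 0 < f p}) ≤ ENNReal.ofReal (∫ p in s, |f p - a| ∂μ) := by
  have hg : IntegrableOn (fun p => |f p - a|) s μ := (hf.sub (integrableOn_const hs)).abs
  have hsub : s \ {p | 0 < f p} ⊆ {p | ENNReal.ofReal a ≤ ENNReal.ofReal |f p - a|} ∩ s :=
    fun p ⟨hps, hp⟩ => by
      have hp : f p ≤ 0 := not_lt.1 hp
      refine ⟨ENNReal.ofReal_le_ofReal ?_, hps⟩
      rw [abs_sub_comm, abs_of_pos (by linarith)]
      linarith
  calc ENNReal.ofReal a * μ (s \ {p | 0 < f p})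
      ≤ ENNReal.ofReal a * μ.restrict s {p | ENNReal.ofReal a ≤ ENNReal.ofReal |f p - a|} :=
        mul_le_mul_right ((measure_mono hsub).trans (Measure.le_restrict_apply _ _)) _
    _ ≤ ∫⁻ p in s, ENNReal.ofReal |f p - a| ∂μ :=
        mul_meas_ge_le_lintegral₀ hg.aemeasurable.ennreal_ofReal _
    _ = _ := (ofReal_integral_eq_lintegral_ofReal hg (ae_of_all _ fun _ => abs_nonneg _)).symm

lemma volume_Ioo_prod_Ioo_ne_top (a b c d : ℝ) : volume (Ioo a b ×ˢ Ioo c d) ≠ ⊤ := by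
  rw [Measure.volume_eq_prod, Measure.prod_prod]
  exact ENNReal.mul_ne_top measure_Ioo_lt_top.ne measure_Ioo_lt_top.ne

lemma eventually_volume_square_diff_setOf_pos_le {W : ℝ × ℝ → ℝ} (hW : Measurable W) {C : ℝ}
    (hbdd : ∀ p, ‖W p‖ ≤ C) {x y δ : ℝ} (hxy : 0 < W (x, y)) (hδ : 0 < δ)
    (hleb : Tendsto (fun ε : ℝ => (2 * ε) ^ (-2 : ℤ) *
        ∫ p in Ioo (x - ε) (x + ε) ×ˢ Ioo (y - ε) (y + ε), |W p - W (x, y)|) (𝓝[>] 0) (𝓝 0)) :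
    ∀ᶠ ε in 𝓝[>] 0, volume (Ioo (x - ε) (x + ε) ×ˢ Ioo (y - ε) (y + ε) \ {p | 0 < W p}) ≤
      ENNReal.ofReal (δ * ε ^ 2) := by
  set a := W (x, y)
  filter_upwards [hleb.eventually_lt_const (show 0 < δ * a / 4 by positivity),
    self_mem_nhdsWithin] with ε hlt (hε : 0 < ε)
  set s := Ioo (x - ε) (x + ε) ×ˢ Ioo (y - ε) (y + ε)
  have hs : volume s ≠ ⊤ := volume_Ioo_prod_Ioo_ne_top _ _ _ _
  have hI : ∫ p in s, |W p - a| ≤ a * (δ * ε ^ 2) := by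
    rw [zpow_neg, zpow_ofNat, inv_mul_lt_iff₀ (by positivity)] at hlt
    linarith
  refine (ENNReal.mul_le_mul_iff_right (ENNReal.ofReal_pos.2 hxy).ne' ENNReal.ofReal_ne_top).1 ?_
  calc ENNReal.ofReal a * volume (s \ {p | 0 < W p})
      ≤ ENNReal.ofReal (∫ p in s, |W p - a|) := measure_diff_setOf_pos_le
        (Measure.integrableOn_of_bounded hs hW.aestronglyMeasurable (ae_of_all _ hbdd)) hs hxy
    _ ≤ ENNReal.ofReal (a * (δ * ε ^ 2)) := ENNReal.ofReal_le_ofReal hI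
    _ = ENNReal.ofReal a * ENNReal.ofReal (δ * ε ^ 2) := ENNReal.ofReal_mul hxy.le

lemma ofReal_le_volume_Ioo_inter_Icc {w ε : ℝ} (hw : w ∈ Icc (0 : ℝ) 1) (hε : 0 ≤ ε)
    (hε1 : ε ≤ 1) : ENNReal.ofReal ε ≤ volume (Ioo (w - ε) (w + ε) ∩ Icc 0 1) := by
  calc ENNReal.ofReal ε ≤ volume (Ioo (w - ε) (w + ε) ∩ Ioo 0 1) := by
        rw [Ioo_inter_Ioo, Real.volume_Ioo]
        refine ENNReal.ofReal_le_ofReal ?_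
        obtain ⟨hw0, hw1⟩ := hw
        simp only [le_sub_iff_add_le, le_min_iff, add_max, max_le_iff]
        refine ⟨⟨?_, ?_⟩, ?_, ?_⟩ <;> linarith
    _ ≤ _ := measure_mono (inter_subset_inter_right _ Ioo_subset_Icc_self)

lemma volume_triangles_unitCube_pos (U : Set (ℝ × ℝ)) {x y z ε δ : ℝ} (hx : x ∈ Icc (0 : ℝ) 1)
    (hy : y ∈ Icc (0 : ℝ) 1) (hz : z ∈ Icc (0 : ℝ) 1) (hε : 0 < ε) (hε1 : ε ≤ 1)
    (hδ : 0 ≤ δ) (hδ6 : 6 * δ < 1)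
    (hxy : volume (Ioo (x - ε) (x + ε) ×ˢ Ioo (y - ε) (y + ε) \ U) ≤ ENNReal.ofReal (δ * ε ^ 2))
    (hyz : volume (Ioo (y - ε) (y + ε) ×ˢ Ioo (z - ε) (z + ε) \ U) ≤ ENNReal.ofReal (δ * ε ^ 2))
    (hzx : volume (Ioo (z - ε) (z + ε) ×ˢ Ioo (x - ε) (x + ε) \ U) ≤ ENNReal.ofReal (δ * ε ^ 2)) :
    0 < volume {t : ℝ × ℝ × ℝ | t ∈ Icc (0 : ℝ) 1 ×ˢ Icc (0 : ℝ) 1 ×ˢ Icc (0 : ℝ) 1 ∧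
      (t.1, t.2.1) ∈ U ∧ (t.2.1, t.2.2) ∈ U ∧ (t.2.2, t.1) ∈ U} := by
  set I : ℝ → Set ℝ := fun w => Ioo (w - ε) (w + ε) ∩ Icc 0 1
  have hI : ∀ w, volume (I w) ≤ ENNReal.ofReal (2 * ε) := fun w => by
    refine (measure_mono inter_subset_left).trans_eq ?_
    rw [Real.volume_Ioo]; ring_nf
  have hbad : ∀ u v w, volume (Ioo (u - ε) (u + ε) ×ˢ Ioo (v - ε) (v + ε) \ U) ≤
      ENNReal.ofReal (δ * ε ^ 2) →
      volume (I w) * volume (I u ×ˢ I v \ U) ≤ ENNReal.ofReal (2 * δ * ε ^ 3) := fun u v w h => by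
    calc volume (I w) * volume (I u ×ˢ I v \ U)
        ≤ ENNReal.ofReal (2 * ε) * ENNReal.ofReal (δ * ε ^ 2) := by
          gcongr
          · exact hI w
          · exact (measure_mono (sdiff_subset_sdiff_left (prod_mono inter_subset_left
              inter_subset_left))).trans h
      _ = ENNReal.ofReal (2 * δ * ε ^ 3) := by rw [← ENNReal.ofReal_mul (by positivity)]; ring_nf
  by_contra! hnull
  have hgood : volume {t ∈ I x ×ˢ I y ×ˢ I z |
      (t.1, t.2.1) ∈ U ∧ (t.2.1, t.2.2) ∈ U ∧ (t.2.2, t.1) ∈ U} = 0 :=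
    measure_mono_null (by rintro t ⟨⟨hx, hy, hz⟩, hU⟩; exact ⟨⟨hx.2, hy.2, hz.2⟩, hU⟩)
      (nonpos_iff_eq_zero.1 hnull)
  have hcube := measure_prod_le_triangles volume U (I x) (I y) (I z)
  simp only [← Measure.volume_eq_prod, hgood, zero_add] at hcube
  have key : ENNReal.ofReal (ε ^ 3) ≤ ENNReal.ofReal (6 * δ * ε ^ 3) := calc
    ENNReal.ofReal (ε ^ 3) = ENNReal.ofReal ε * (ENNReal.ofReal ε * ENNReal.ofReal ε) := by
        rw [← ENNReal.ofReal_mul hε.le, ← ENNReal.ofReal_mul hε.le]; ring_nf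
    _ ≤ volume (I x ×ˢ I y ×ˢ I z) := by
        rw [Measure.volume_eq_prod, Measure.prod_prod, Measure.volume_eq_prod, Measure.prod_prod]
        gcongr <;> exact ofReal_le_volume_Ioo_inter_Icc ‹_› hε.le hε1
    _ ≤ ENNReal.ofReal (2 * δ * ε ^ 3) + ENNReal.ofReal (2 * δ * ε ^ 3)
          + ENNReal.ofReal (2 * δ * ε ^ 3) :=
        hcube.trans (add_le_add (add_le_add (hbad x y z hxy) (hbad y z x hyz)) (hbad z x y hzx))
    _ = ENNReal.ofReal (6 * δ * ε ^ 3) := by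
        rw [← ENNReal.ofReal_add (by positivity) (by positivity),
          ← ENNReal.ofReal_add (by positivity) (by positivity)]
        ring_nf
  rw [ENNReal.ofReal_le_ofReal_iff (by positivity)] at key
  nlinarith [pow_pos hε 3]

theorem kernel_no_cycle_from_lebesgue_points_general
    (W : ℝ × ℝ → ℝ) (hWmeas : Measurable W)
    (hrange : ∀ p, W p ∈ Set.Icc (0 : ℝ) 1)
    (hleb : ∀ x y : ℝ, 0 < W (x, y) →
      Tendsto (fun ε : ℝ => (2 * ε) ^ (-2 : ℤ) *
        ∫ p in Set.Ioo (x - ε) (x + ε) ×ˢ Set.Ioo (y - ε) (y + ε),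
          |W p - W (x, y)| ∂(volume : Measure (ℝ × ℝ)))
        (nhdsWithin 0 (Set.Ioi 0)) (nhds 0))
    (htriple : ∀ᵐ t ∂(volume : Measure (ℝ × ℝ × ℝ)),
      t ∈ Set.Icc (0:ℝ) 1 ×ˢ (Set.Icc (0:ℝ) 1 ×ˢ Set.Icc (0:ℝ) 1) →
      W (t.1, t.2.1) * W (t.2.1, t.2.2) * W (t.2.2, t.1) = 0) :
    ∀ x y z : ℝ, x ∈ Set.Icc (0:ℝ) 1 → y ∈ Set.Icc (0:ℝ) 1 →
      z ∈ Set.Icc (0:ℝ) 1 →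
      0 < W (x, y) → 0 < W (y, z) → W (z, x) = 0 := by
  intro x y z hx hy hz hxy hyz
  by_contra hzx
  replace hzx : 0 < W (z, x) := (hrange (z, x)).1.lt_of_ne' hzx
  have hbdd : ∀ p, ‖W p‖ ≤ 1 := fun p => by
    rw [Real.norm_of_nonneg (hrange p).1]; exact (hrange p).2
  have hsmall : ∀ u v, 0 < W (u, v) → ∀ᶠ ε in 𝓝[>] 0,
      volume (Ioo (u - ε) (u + ε) ×ˢ Ioo (v - ε) (v + ε) \ {p | 0 < W p}) ≤
        ENNReal.ofReal (1 / 12 * ε ^ 2) := fun u v huv =>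
    eventually_volume_square_diff_setOf_pos_le hWmeas hbdd huv (by norm_num) (hleb u v huv)
  have hε_le_one : ∀ᶠ ε : ℝ in 𝓝[>] 0, ε ≤ 1 := nhdsWithin_le_nhds (eventually_le_nhds one_pos)
  obtain ⟨ε, h1, h2, h3, hε1, hε0⟩ :=
    ((hsmall x y hxy).and <| (hsmall y z hyz).and <| (hsmall z x hzx).and <|
      hε_le_one.and self_mem_nhdsWithin).exists
  refine (volume_triangles_unitCube_pos {p | 0 < W p} hx hy hz hε0 hε1 (by norm_num) (by norm_num)
    h1 h2 h3).ne' (measure_mono_null ?_ (ae_iff.1 htriple))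
  rintro t ⟨ht, h12, h23, h31⟩
  exact fun h => (mul_pos (mul_pos h12 h23) h31).ne' (h ht)

/-- If every point where `W > 0` is a Lebesgue point of `W` and
`W(x₁,x₂)W(x₂,x₃)W(x₃,x₁) = 0` for a.e. `(x₁,x₂,x₃) ∈ [0,1]³`, then
`W(x,y) > 0` and `W(y,z) > 0` imply `W(z,x) = 0` for all `x, y, z ∈ [0,1]`. -/
theorem kernel_no_cycle_from_lebesgue_points
    (W : ℝ × ℝ → ℝ) (hWmeas : Measurable W)
    (hrange : ∀ p, W p ∈ Set.Icc (0 : ℝ) 1)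
    (hsupp : ∀ p : ℝ × ℝ, p ∉ Set.Icc (0:ℝ) 1 ×ˢ Set.Icc (0:ℝ) 1 → W p = 0)
    (hleb : ∀ x y : ℝ, 0 < W (x, y) →
      Tendsto (fun ε : ℝ => (2 * ε) ^ (-2 : ℤ) *
        ∫ p in Set.Ioo (x - ε) (x + ε) ×ˢ Set.Ioo (y - ε) (y + ε),
          |W p - W (x, y)| ∂(volume : Measure (ℝ × ℝ)))
        (nhdsWithin 0 (Set.Ioi 0)) (nhds 0))
    (htriple : ∀ᵐ t ∂(volume : Measure (ℝ × ℝ × ℝ)),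
      t ∈ Set.Icc (0:ℝ) 1 ×ˢ (Set.Icc (0:ℝ) 1 ×ˢ Set.Icc (0:ℝ) 1) →
      W (t.1, t.2.1) * W (t.2.1, t.2.2) * W (t.2.2, t.1) = 0) :
    ∀ x y z : ℝ, x ∈ Set.Icc (0:ℝ) 1 → y ∈ Set.Icc (0:ℝ) 1 →
      z ∈ Set.Icc (0:ℝ) 1 →
      0 < W (x, y) → 0 < W (y, z) → W (z, x) = 0 :=
  kernel_no_cycle_from_lebesgue_points_general W hWmeas hrange hleb htriple
end

section
/- Let W₁ : S₁² → ℝ and W₂ : S₂² → ℝ be finite-type integrable functions on probability spaces (S₁, μ₁), (S₂, μ₂), with corresponding partitions {A_i}_{i=1}^{N₁}, {B_j}_{j=1}^{N₂}. If φ₁ : S → S₁ and φ₂ : S → S₂ are measure-preserving maps from a common probability space (S, μ), then the cut norm ‖W₁∘(φ₁×φ₁) − W₂∘(φ₂×φ₂)‖□ depends only on the values of W₁ on the A_i × A_{i'}, the values of W₂ on the B_j × B_{j'}, and the numbers μ(φ₁⁻¹(A_i) ∩ φ₂⁻¹(B_j)). -/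
/-!
The sets `φ₁⁻¹(A_i) ∩ φ₂⁻¹(B_j)` partition `T`, and `W₁^{φ₁} − W₂^{φ₂}` is constant on products of
these cells. Hence the integral over `C × D` is a bilinear form in the vectors `(ν(C ∩ cell))` and
`(ν(D ∩ cell))`, which range over the boxes `0 ≤ · ≤ ν(cell)`; its absolute value is largest at a
vertex of the boxes, i.e. when `C` and `D` are unions of cells. The cut norm is therefore a maximum
of finitely many expressions in the values of `W₁`, `W₂` and the measures of the cells.
-/

open MeasureTheory Set Function

theorem pairwise_disjoint_prod {ι κ α β : Type*} {s : ι → Set α} {t : κ → Set β}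
    (hs : Pairwise (Disjoint on s)) (ht : Pairwise (Disjoint on t)) :
    Pairwise (Disjoint on fun q : ι × κ => s q.1 ×ˢ t q.2) := by
  simpa [PairwiseDisjoint, Set.pairwise_univ] using
    PairwiseDisjoint.prod (Set.pairwise_univ.2 hs) (Set.pairwise_univ.2 ht)

theorem exists_finset_abs_sum_mul_le {ι : Type*} [Fintype ι] (d a m : ι → ℝ)
    (ha : ∀ k, 0 ≤ a k) (ham : ∀ k, a k ≤ m k) :
    ∃ s : Finset ι, |∑ k, d k * a k| ≤ |∑ k ∈ s, d k * m k| := by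
  classical
  have hup : ∑ k, d k * a k ≤ ∑ k with 0 ≤ d k, d k * m k := by
    rw [Finset.sum_filter]
    gcongr with k
    split_ifs with hk
    · exact mul_le_mul_of_nonneg_left (ham k) hk
    · nlinarith [ha k]
  have hlow : ∑ k with d k < 0, d k * m k ≤ ∑ k, d k * a k := by
    rw [Finset.sum_filter]
    gcongr with k
    split_ifs with hk
    · exact mul_le_mul_of_nonpos_left (ham k) hk.le
    · nlinarith [ha k]
  rcases max_choice |∑ k with d k < 0, d k * m k| |∑ k with 0 ≤ d k, d k * m k| with h | h
  · exact ⟨_, h ▸ abs_le_max_abs_abs hlow hup⟩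
  · exact ⟨_, h ▸ abs_le_max_abs_abs hlow hup⟩

theorem exists_finset_abs_sum_sum_mul_le {ι κ : Type*} [Fintype ι] [Fintype κ]
    (c : ι → κ → ℝ) (m : ι → ℝ) (m' : κ → ℝ) (a : ι → ℝ) (b : κ → ℝ)
    (ha : ∀ k, 0 ≤ a k) (ham : ∀ k, a k ≤ m k) (hb : ∀ l, 0 ≤ b l) (hbm : ∀ l, b l ≤ m' l) :
    ∃ (s : Finset ι) (t : Finset κ),
      |∑ k, ∑ l, c k l * a k * b l| ≤ |∑ k ∈ s, ∑ l ∈ t, c k l * m k * m' l| := by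
  obtain ⟨s, hs⟩ := exists_finset_abs_sum_mul_le (fun k => ∑ l, c k l * b l) a m ha ham
  obtain ⟨t, ht⟩ := exists_finset_abs_sum_mul_le (fun l => ∑ k ∈ s, c k l * m k) b m' hb hbm
  refine ⟨s, t, ?_⟩
  calc |∑ k, ∑ l, c k l * a k * b l| = |∑ k, (∑ l, c k l * b l) * a k| := by
        simp only [Finset.sum_mul, mul_right_comm]
    _ ≤ |∑ k ∈ s, (∑ l, c k l * b l) * m k| := hs
    _ = |∑ l, (∑ k ∈ s, c k l * m k) * b l| := by
        simp only [Finset.sum_mul, mul_right_comm]; rw [Finset.sum_comm]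
    _ ≤ |∑ l ∈ t, (∑ k ∈ s, c k l * m k) * m' l| := ht
    _ = |∑ k ∈ s, ∑ l ∈ t, c k l * m k * m' l| := by
        simp only [Finset.sum_mul]; rw [Finset.sum_comm]

structure IsMeasurablePartition {α ι : Type*} [MeasurableSpace α] (P : ι → Set α) : Prop where
  measurableSet : ∀ k, MeasurableSet (P k)
  pairwise_disjoint : Pairwise (Disjoint on P)
  iUnion_eq_univ : ⋃ k, P k = univ

theorem IsMeasurablePartition.preimage_inter {T α β ι κ : Type*} [MeasurableSpace T]
    [MeasurableSpace α] [MeasurableSpace β] {A : ι → Set α} {B : κ → Set β}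
    (hA : IsMeasurablePartition A) (hB : IsMeasurablePartition B)
    {f : T → α} {g : T → β} (hf : Measurable f) (hg : Measurable g) :
    IsMeasurablePartition fun q : ι × κ => f ⁻¹' A q.1 ∩ g ⁻¹' B q.2 where
  measurableSet q := (hf (hA.measurableSet q.1)).inter (hg (hB.measurableSet q.2))
  pairwise_disjoint := by
    simp_rw [← mk_preimage_prod]
    exact fun q q' h =>
      (pairwise_disjoint_prod hA.pairwise_disjoint hB.pairwise_disjoint h).preimage _
  iUnion_eq_univ := by
    simp_rw [← mk_preimage_prod, ← preimage_iUnion, iUnion_prod, hA.iUnion_eq_univ,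
      hB.iUnion_eq_univ, univ_prod_univ, preimage_univ]

theorem biUnion_inter_eq_ite {α ι : Type*} {P : ι → Set α}
    (hP : Pairwise (Disjoint on P)) (s : Finset ι) (k : ι) [Decidable (k ∈ s)] :
    (⋃ j ∈ s, P j) ∩ P k = if k ∈ s then P k else ∅ := by
  split_ifs with hk
  · exact inter_eq_right.2 (subset_biUnion_of_mem (u := P) hk)
  · exact disjoint_iff_inter_eq_empty.1
      (disjoint_iUnion₂_left.2 fun j hj => hP (ne_of_mem_of_not_mem hj hk))

theorem exists_eq_of_const_on_prod_cells {α ι : Type*} {A : ι → Set α} {W : α × α → ℝ}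
    (hW : ∀ i i' : ι, ∀ x x' y y' : α, x ∈ A i → x' ∈ A i → y ∈ A i' → y' ∈ A i' →
      W (x, y) = W (x', y')) :
    ∃ v : ι → ι → ℝ, ∀ i i' x y, x ∈ A i → y ∈ A i' → W (x, y) = v i i' := by
  have hval : ∀ i i', ∃ r, ∀ x y, x ∈ A i → y ∈ A i' → W (x, y) = r := by
    intro i i'
    by_cases h : (A i ×ˢ A i').Nonempty
    · obtain ⟨⟨x₀, y₀⟩, hx₀, hy₀⟩ := h
      exact ⟨W (x₀, y₀), fun x y hx hy => hW i i' x x₀ y y₀ hx hx₀ hy hy₀⟩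
    · exact ⟨0, fun x y hx hy => (h ⟨(x, y), hx, hy⟩).elim⟩
  choose v hv using hval
  exact ⟨v, hv⟩

noncomputable def cutNorm {T : Type*} [MeasurableSpace T] (ν : Measure T) (U : T × T → ℝ) : ℝ :=
  sSup {t : ℝ | ∃ C D : Set T, MeasurableSet C ∧ MeasurableSet D ∧
    t = |∫ p in C ×ˢ D, U p ∂(ν.prod ν)|}

section StepFunction

variable {T ι : Type*} [MeasurableSpace T] {ν : Measure T} [IsFiniteMeasure ν] [Fintype ι]
  {P : ι → Set T} {U : T × T → ℝ} {c : ι → ι → ℝ}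

theorem setIntegral_prod_eq_sum_of_const_on_cells (hP : IsMeasurablePartition P)
    (hU : ∀ k l x y, x ∈ P k → y ∈ P l → U (x, y) = c k l)
    {C D : Set T} (hC : MeasurableSet C) (hD : MeasurableSet D) :
    ∫ p in C ×ˢ D, U p ∂(ν.prod ν) = ∑ k, ∑ l, c k l * ν.real (C ∩ P k) * ν.real (D ∩ P l) := by
  set piece : ι × ι → Set (T × T) := fun q => (C ∩ P q.1) ×ˢ (D ∩ P q.2)
  have hmeas q : MeasurableSet (piece q) :=
    (hC.inter (hP.measurableSet q.1)).prod (hD.inter (hP.measurableSet q.2))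
  have hdisj : Pairwise (Disjoint on piece) :=
    have h (E : Set T) : Pairwise (Disjoint on fun k => E ∩ P k) :=
      fun k l hkl => (hP.pairwise_disjoint hkl).mono inf_le_right inf_le_right
    pairwise_disjoint_prod (h C) (h D)
  have hcover : C ×ˢ D = ⋃ q, piece q := by
    rw [iUnion_prod (fun k => C ∩ P k) (fun l => D ∩ P l), ← inter_iUnion, ← inter_iUnion,
      hP.iUnion_eq_univ, inter_univ, inter_univ]
  have hconst q : ∀ p ∈ piece q, U p = c q.1 q.2 :=
    fun ⟨x, y⟩ ⟨⟨_, hx⟩, _, hy⟩ => hU _ _ x y hx hy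
  have hint q : IntegrableOn U (piece q) (ν.prod ν) :=
    (integrableOn_congr_fun (hconst q) (hmeas q)).2 (integrableOn_const (measure_ne_top _ _))
  rw [hcover, integral_iUnion_fintype hmeas hdisj hint, Fintype.sum_prod_type]
  refine Finset.sum_congr rfl fun k _ => Finset.sum_congr rfl fun l _ => ?_
  rw [setIntegral_congr_fun (hmeas _) (hconst _), setIntegral_const, measureReal_prod_prod,
    smul_eq_mul]
  ring

theorem setIntegral_biUnion_prod_biUnion_of_const_on_cells [DecidableEq ι]
    (hP : IsMeasurablePartition P) (hU : ∀ k l x y, x ∈ P k → y ∈ P l → U (x, y) = c k l)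
    (s t : Finset ι) :
    ∫ p in (⋃ j ∈ s, P j) ×ˢ (⋃ j ∈ t, P j), U p ∂(ν.prod ν) =
      ∑ k ∈ s, ∑ l ∈ t, c k l * ν.real (P k) * ν.real (P l) := by
  rw [setIntegral_prod_eq_sum_of_const_on_cells hP hU
    (s.measurableSet_biUnion fun j _ => hP.measurableSet j)
    (t.measurableSet_biUnion fun j _ => hP.measurableSet j)]
  simp only [biUnion_inter_eq_ite hP.pairwise_disjoint, apply_ite ν.real,
    measureReal_empty, mul_ite, ite_mul, mul_zero, zero_mul, Finset.sum_ite_mem,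
    Finset.univ_inter, Finset.sum_ite_irrel, Finset.sum_const_zero]

theorem cutNorm_eq_sup'_of_const_on_cells (hP : IsMeasurablePartition P)
    (hU : ∀ k l x y, x ∈ P k → y ∈ P l → U (x, y) = c k l) :
    cutNorm ν U = Finset.univ.sup' Finset.univ_nonempty fun st : Finset ι × Finset ι =>
      |∑ k ∈ st.1, ∑ l ∈ st.2, c k l * ν.real (P k) * ν.real (P l)| := by
  classical
  set F := fun st : Finset ι × Finset ι =>
    |∑ k ∈ st.1, ∑ l ∈ st.2, c k l * ν.real (P k) * ν.real (P l)|
  set M := Finset.univ.sup' Finset.univ_nonempty F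
  have hle : ∀ t ∈ {t : ℝ | ∃ C D : Set T, MeasurableSet C ∧ MeasurableSet D ∧
      t = |∫ p in C ×ˢ D, U p ∂(ν.prod ν)|}, t ≤ M := by
    rintro _ ⟨C, D, hC, hD, rfl⟩
    have hcell (E : Set T) k : ν.real (E ∩ P k) ≤ ν.real (P k) :=
      measureReal_mono inter_subset_right
    obtain ⟨s, t, hst⟩ := exists_finset_abs_sum_sum_mul_le c _ _ _ _
      (fun _ => measureReal_nonneg) (hcell C) (fun _ => measureReal_nonneg) (hcell D)
    rw [setIntegral_prod_eq_sum_of_const_on_cells hP hU hC hD]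
    exact hst.trans (Finset.le_sup' F (Finset.mem_univ (s, t)))
  refine le_antisymm (csSup_le ⟨_, ∅, ∅, .empty, .empty, rfl⟩ hle) ?_
  refine Finset.sup'_le _ _ fun st _ => le_csSup ⟨M, hle⟩ ⟨⋃ j ∈ st.1, P j, ⋃ j ∈ st.2, P j,
    st.1.measurableSet_biUnion fun j _ => hP.measurableSet j,
    st.2.measurableSet_biUnion fun j _ => hP.measurableSet j, ?_⟩
  rw [setIntegral_biUnion_prod_biUnion_of_const_on_cells hP hU]

end StepFunction

theorem cutNorm_comp_sub_comp_eq_sup' {S₁ S₂ T ι κ : Type*} [MeasurableSpace S₁]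
    [MeasurableSpace S₂] [MeasurableSpace T] [Fintype ι] [Fintype κ]
    {A : ι → Set S₁} {B : κ → Set S₂} (hA : IsMeasurablePartition A)
    (hB : IsMeasurablePartition B) {W₁ : S₁ × S₁ → ℝ} {W₂ : S₂ × S₂ → ℝ}
    {v₁ : ι → ι → ℝ} {v₂ : κ → κ → ℝ}
    (hv₁ : ∀ i i' x y, x ∈ A i → y ∈ A i' → W₁ (x, y) = v₁ i i')
    (hv₂ : ∀ j j' x y, x ∈ B j → y ∈ B j' → W₂ (x, y) = v₂ j j')
    (ν : Measure T) [IsFiniteMeasure ν] {f₁ : T → S₁} {f₂ : T → S₂}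
    (hf₁ : Measurable f₁) (hf₂ : Measurable f₂) :
    cutNorm ν (fun p => W₁ (f₁ p.1, f₁ p.2) - W₂ (f₂ p.1, f₂ p.2)) =
      Finset.univ.sup' Finset.univ_nonempty fun st : Finset (ι × κ) × Finset (ι × κ) =>
        |∑ k ∈ st.1, ∑ l ∈ st.2, (v₁ k.1 l.1 - v₂ k.2 l.2) *
          ν.real (f₁ ⁻¹' A k.1 ∩ f₂ ⁻¹' B k.2) * ν.real (f₁ ⁻¹' A l.1 ∩ f₂ ⁻¹' B l.2)| :=
  cutNorm_eq_sup'_of_const_on_cells (hA.preimage_inter hB hf₁ hf₂)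
    fun _ _ _ _ ⟨hx₁, hx₂⟩ ⟨hy₁, hy₂⟩ => by rw [hv₁ _ _ _ _ hx₁ hy₁, hv₂ _ _ _ _ hx₂ hy₂]

theorem cut_norm_finite_type_depends_only_on_intersections_general
    {S₁ S₂ : Type*} [MeasurableSpace S₁] [MeasurableSpace S₂]
    (μ₁ : Measure S₁) (μ₂ : Measure S₂)
    (W₁ : S₁ × S₁ → ℝ) (W₂ : S₂ × S₂ → ℝ)
    (N₁ N₂ : ℕ) (A : Fin N₁ → Set S₁) (B : Fin N₂ → Set S₂)
    (hAmeas : ∀ i, MeasurableSet (A i)) (hBmeas : ∀ j, MeasurableSet (B j))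
    (hAdisj : Pairwise fun i i' => Disjoint (A i) (A i'))
    (hBdisj : Pairwise fun j j' => Disjoint (B j) (B j'))
    (hAcover : (⋃ i, A i) = Set.univ) (hBcover : (⋃ j, B j) = Set.univ)
    (hW₁const : ∀ i i' : Fin N₁, ∀ x x' y y' : S₁, x ∈ A i → x' ∈ A i →
      y ∈ A i' → y' ∈ A i' → W₁ (x, y) = W₁ (x', y'))
    (hW₂const : ∀ j j' : Fin N₂, ∀ x x' y y' : S₂, x ∈ B j → x' ∈ B j →
      y ∈ B j' → y' ∈ B j' → W₂ (x, y) = W₂ (x', y'))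
    {T T' : Type*} [MeasurableSpace T] [MeasurableSpace T']
    (ν : Measure T) (ν' : Measure T')
    [IsProbabilityMeasure ν] [IsProbabilityMeasure ν']
    (φ₁ : T → S₁) (φ₂ : T → S₂) (ψ₁ : T' → S₁) (ψ₂ : T' → S₂)
    (hφ₁ : MeasurePreserving φ₁ ν μ₁) (hφ₂ : MeasurePreserving φ₂ ν μ₂)
    (hψ₁ : MeasurePreserving ψ₁ ν' μ₁) (hψ₂ : MeasurePreserving ψ₂ ν' μ₂)
    (hsame : ∀ i j, ν (φ₁ ⁻¹' A i ∩ φ₂ ⁻¹' B j) = ν' (ψ₁ ⁻¹' A i ∩ ψ₂ ⁻¹' B j)) :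
    sSup {t : ℝ | ∃ C D : Set T, MeasurableSet C ∧ MeasurableSet D ∧
        t = |∫ p in C ×ˢ D,
          (W₁ (φ₁ p.1, φ₁ p.2) - W₂ (φ₂ p.1, φ₂ p.2)) ∂(ν.prod ν)|} =
      sSup {t : ℝ | ∃ C D : Set T', MeasurableSet C ∧ MeasurableSet D ∧
        t = |∫ p in C ×ˢ D,
          (W₁ (ψ₁ p.1, ψ₁ p.2) - W₂ (ψ₂ p.1, ψ₂ p.2)) ∂(ν'.prod ν')|} := by
  have hA : IsMeasurablePartition A := ⟨hAmeas, hAdisj, hAcover⟩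
  have hB : IsMeasurablePartition B := ⟨hBmeas, hBdisj, hBcover⟩
  obtain ⟨v₁, hv₁⟩ := exists_eq_of_const_on_prod_cells hW₁const
  obtain ⟨v₂, hv₂⟩ := exists_eq_of_const_on_prod_cells hW₂const
  change cutNorm ν _ = cutNorm ν' _
  rw [cutNorm_comp_sub_comp_eq_sup' hA hB hv₁ hv₂ ν hφ₁.measurable hφ₂.measurable,
    cutNorm_comp_sub_comp_eq_sup' hA hB hv₁ hv₂ ν' hψ₁.measurable hψ₂.measurable]
  simp only [measureReal_def, hsame]

/-- For finite-type functions `W₁`, `W₂` with partitions `{A_i}`,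
`{B_j}`, the cut norm `‖W₁^{φ₁} − W₂^{φ₂}‖□` depends only on the values of
`W₁`, `W₂` and the numbers `μ(φ₁⁻¹(A_i) ∩ φ₂⁻¹(B_j))`: two couplings with the
same intersection measures give equal cut norms. -/
theorem cut_norm_finite_type_depends_only_on_intersections
    {S₁ S₂ : Type*} [MeasurableSpace S₁] [MeasurableSpace S₂]
    (μ₁ : Measure S₁) (μ₂ : Measure S₂)
    [IsProbabilityMeasure μ₁] [IsProbabilityMeasure μ₂]
    (W₁ : S₁ × S₁ → ℝ) (W₂ : S₂ × S₂ → ℝ)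
    (hW₁ : Integrable W₁ (μ₁.prod μ₁)) (hW₂ : Integrable W₂ (μ₂.prod μ₂))
    (N₁ N₂ : ℕ) (A : Fin N₁ → Set S₁) (B : Fin N₂ → Set S₂)
    (hAmeas : ∀ i, MeasurableSet (A i)) (hBmeas : ∀ j, MeasurableSet (B j))
    (hAdisj : Pairwise fun i i' => Disjoint (A i) (A i'))
    (hBdisj : Pairwise fun j j' => Disjoint (B j) (B j'))
    (hAcover : (⋃ i, A i) = Set.univ) (hBcover : (⋃ j, B j) = Set.univ)
    (hW₁const : ∀ i i' : Fin N₁, ∀ x x' y y' : S₁, x ∈ A i → x' ∈ A i →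
      y ∈ A i' → y' ∈ A i' → W₁ (x, y) = W₁ (x', y'))
    (hW₂const : ∀ j j' : Fin N₂, ∀ x x' y y' : S₂, x ∈ B j → x' ∈ B j →
      y ∈ B j' → y' ∈ B j' → W₂ (x, y) = W₂ (x', y'))
    {T T' : Type*} [MeasurableSpace T] [MeasurableSpace T']
    (ν : Measure T) (ν' : Measure T')
    [IsProbabilityMeasure ν] [IsProbabilityMeasure ν']
    (φ₁ : T → S₁) (φ₂ : T → S₂) (ψ₁ : T' → S₁) (ψ₂ : T' → S₂)
    (hφ₁ : MeasurePreserving φ₁ ν μ₁) (hφ₂ : MeasurePreserving φ₂ ν μ₂)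
    (hψ₁ : MeasurePreserving ψ₁ ν' μ₁) (hψ₂ : MeasurePreserving ψ₂ ν' μ₂)
    (hsame : ∀ i j, ν (φ₁ ⁻¹' A i ∩ φ₂ ⁻¹' B j) = ν' (ψ₁ ⁻¹' A i ∩ ψ₂ ⁻¹' B j)) :
    sSup {t : ℝ | ∃ C D : Set T, MeasurableSet C ∧ MeasurableSet D ∧
        t = |∫ p in C ×ˢ D,
          (W₁ (φ₁ p.1, φ₁ p.2) - W₂ (φ₂ p.1, φ₂ p.2)) ∂(ν.prod ν)|} =
      sSup {t : ℝ | ∃ C D : Set T', MeasurableSet C ∧ MeasurableSet D ∧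
        t = |∫ p in C ×ˢ D,
          (W₁ (ψ₁ p.1, ψ₁ p.2) - W₂ (ψ₂ p.1, ψ₂ p.2)) ∂(ν'.prod ν')|} :=
  cut_norm_finite_type_depends_only_on_intersections_general μ₁ μ₂ W₁ W₂ N₁ N₂ A B hAmeas hBmeas
    hAdisj hBdisj hAcover hBcover hW₁const hW₂const ν ν' φ₁ φ₂ ψ₁ ψ₂ hφ₁ hφ₂ hψ₁ hψ₂ hsame
end

section
/- Suppose (S, μ) is a Borel probability space (a probability space whose measurable space is isomorphic to a Borel subset of [0,1]) and γ : [0,1] → S is measure-preserving (with Lebesgue measure on [0,1]). Then there exists a measurable measure-preserving function α : S × [0,1] → [0,1] (with respect to μ × λ on the domain and λ on the codomain) such that γ(α(s, y)) = s for (μ × λ)-almost every (s, y) ∈ S × [0,1]. -/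
/-!
Disintegrate the law `ρ` of `(γ y, y)` under Lebesgue measure on `[0,1]` as `μ ⊗ₘ κ`. Since `ℝ`
is standard Borel, the kernel `κ` is the image of Lebesgue measure on `[0,1]` under a jointly
measurable `g`, so `(s, u) ↦ (s, g (s, u))` carries `μ × λ` to `ρ`. Take `α = g`: the second
marginal of `ρ` is `λ`, and `ρ` lives on the graph `{(γ y, y)}`.
-/

open MeasureTheory ProbabilityTheory Set

theorem ProbabilityTheory.Kernel.exists_measurable_map_restrict_Icc_eq
    {X Y : Type*} [MeasurableSpace X] [MeasurableSpace Y] [StandardBorelSpace Y] [Nonempty Y]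
    (κ : Kernel X Y) [IsMarkovKernel κ] :
    ∃ g : X × ℝ → Y, Measurable g ∧
      ∀ x, (volume.restrict (Icc (0 : ℝ) 1)).map (fun u ↦ g (x, u)) = κ x := by
  obtain ⟨f, hf, hfκ⟩ := κ.exists_measurable_map_eq_unitInterval
  refine ⟨fun p ↦ f p.1 (projIcc 0 1 zero_le_one p.2), by fun_prop, fun x ↦ ?_⟩
  rw [← unitInterval.measurePreserving_coe.map_eq, Measure.map_map (by fun_prop) (by fun_prop)]
  simpa [Function.comp_def, projIcc_val] using hfκ x

theorem MeasureTheory.Measure.measurePreserving_prodMk_compProd_of_map_eq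
    {X Z Y : Type*} [MeasurableSpace X] [MeasurableSpace Z] [MeasurableSpace Y]
    (μ : Measure X) [SFinite μ] (ν : Measure Z) [SFinite ν] (κ : Kernel X Y) [IsSFiniteKernel κ]
    {g : X × Z → Y} (hg : Measurable g) (hgκ : ∀ x, ν.map (fun z ↦ g (x, z)) = κ x) :
    MeasurePreserving (fun p ↦ (p.1, g p)) (μ.prod ν) (μ ⊗ₘ κ) := by
  refine ⟨by fun_prop, Measure.ext fun s hs ↦ ?_⟩
  rw [Measure.map_apply (by fun_prop) hs, Measure.prod_apply (hs.preimage (by fun_prop)),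
    Measure.compProd_apply hs]
  refine lintegral_congr fun x ↦ ?_
  rw [← hgκ, Measure.map_apply (by fun_prop) (measurable_prodMk_left hs)]
  rfl

/-- If `(S, μ)` is a Borel (standard Borel) probability space and
`γ : [0,1] → S` is measure-preserving (for Lebesgue measure on `[0,1]`), then
there is a measure-preserving `α : S × [0,1] → [0,1]` with `γ(α(s,y)) = s`
for `(μ × λ)`-a.e. `(s,y)`. -/
theorem exists_measurable_right_inverse {S : Type*} [MeasurableSpace S]
    [StandardBorelSpace S] (μ : Measure S) [IsProbabilityMeasure μ]
    (γ : ℝ → S)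
    (hγ : MeasurePreserving γ ((volume : Measure ℝ).restrict (Set.Icc 0 1)) μ) :
    ∃ α : S × ℝ → ℝ,
      MeasurePreserving α
        (μ.prod ((volume : Measure ℝ).restrict (Set.Icc 0 1)))
        ((volume : Measure ℝ).restrict (Set.Icc 0 1)) ∧
      ∀ᵐ p ∂(μ.prod ((volume : Measure ℝ).restrict (Set.Icc 0 1))),
        γ (α p) = p.1 := by
  set leb := (volume : Measure ℝ).restrict (Icc 0 1)
  have h_graph : Measurable fun y ↦ (γ y, y) := hγ.measurable.prodMk measurable_id
  let ρ := leb.map fun y ↦ (γ y, y)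
  have : IsProbabilityMeasure leb := ⟨by simp [leb, Real.volume_Icc]⟩
  have hρ_fst : ρ.fst = μ := by
    rw [Measure.fst, Measure.map_map measurable_fst h_graph]
    exact hγ.map_eq
  have hρ_snd : ρ.snd = leb := by
    rw [Measure.snd, Measure.map_map measurable_snd h_graph]
    exact Measure.map_id
  obtain ⟨g, hg, hgκ⟩ := ρ.condKernel.exists_measurable_map_restrict_Icc_eq
  have hρ : μ ⊗ₘ ρ.condKernel = ρ := by
    rw [← hρ_fst]
    exact ρ.disintegrate _
  have hΦ : MeasurePreserving (fun p ↦ (p.1, g p)) (μ.prod leb) ρ :=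
    hρ ▸ Measure.measurePreserving_prodMk_compProd_of_map_eq μ leb ρ.condKernel hg hgκ
  refine ⟨g, (show MeasurePreserving Prod.snd ρ leb from ⟨measurable_snd, hρ_snd⟩).comp hΦ,
    hΦ.quasiMeasurePreserving.ae (p := fun q ↦ γ q.2 = q.1) ?_⟩
  have h_graph_set : MeasurableSet {q : S × ℝ | γ q.2 = q.1} :=
    measurableSet_eq_fun (hγ.measurable.comp measurable_snd) measurable_fst
  exact (ae_map_iff h_graph.aemeasurable h_graph_set).2 (ae_of_all _ fun _ ↦ rfl)
end

section
/- Let W be a kernel on an ordered probability space (S, μ, ≺), let p ∈ [0,1], and define the 'thinned' ordered probability space S* = S ∪ {*} with μ_p({*}) = 1 − p and μ_p(A) = p·μ(A) for measurable A ⊆ S, with ≺ extended so that * is incomparable to every element, and W extended by W(*,x) = W(x,*) = W(*,*) = 0. Then for every finite poset Q on {1,...,k}: ∫_{(S*)^k} ∏_{i <_Q j} W(x_i,x_j) dμ_p^k = p^{n(Q)} · ∫_{S^k} ∏_{i <_Q j} W(x_i,x_j) dμ^k, where n(Q) is the number of elements of Q comparable to at least one other element of Q. -/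
open MeasureTheory

/-- The natural σ-algebra on `Option α`, transported from `α ⊕ Unit`. -/
instance optionMeasurableSpace {α : Type*} [MeasurableSpace α] :
    MeasurableSpace (Option α) :=
  MeasurableSpace.map (fun x : α ⊕ Unit => Sum.elim some (fun _ => none) x)
    inferInstance

/-!
The thinned space is a coupling: `μ_p` is the image of `Ber(p) ⊗ μ` under `(b, x) ↦ keepIf b x`,
which keeps `x` when the coin `b` shows `true` and sends it to `*` otherwise. Pulled back along the
`k`-fold product of this coupling, the factor `W*(x_i, x_j)` of an edge `i <_Q j` is
`W(x_i, x_j)` if both coins show `true` and `0` otherwise, so the integrand factors as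
`(∏_{i comparable} [b_i]) · ∏_{i <_Q j} W(x_i, x_j)`. Coins and points are independent, and each of
the `n(Q)` coin indicators integrates to `p`.
-/

open ProbabilityTheory unitInterval Finset Function

namespace Option

variable {S γ : Type*} [MeasurableSpace S] [MeasurableSpace γ]

lemma measurable_of_measurable_comp_some {h : Option S → γ} (hh : Measurable (h ∘ some)) :
    Measurable h := by
  have hsum : (fun z : S ⊕ Unit => h (Sum.elim some (fun _ => none) z)) =
      Sum.elim (h ∘ some) fun _ => h none := by
    funext z; cases z <;> rfl
  intro t ht
  change MeasurableSet ((fun z : S ⊕ Unit => h (Sum.elim some (fun _ => none) z)) ⁻¹' t)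
  rw [hsum]
  exact hh.sumElim measurable_const ht

lemma measurable_some : Measurable (some : S → Option S) := fun _ ht => measurable_inl ht

lemma measurableSet_isSome : MeasurableSet {o : Option S | o.isSome} :=
  measurableSet_eq_fun (measurable_of_measurable_comp_some (γ := Bool) measurable_const)
    measurable_const

end Option

section Thinning

variable {S : Type*}

def keepIf (b : Bool) (x : S) : Option S := if b then some x else none

def extendByZero (W : S → S → ℝ) (a b : Option S) : ℝ :=
  a.elim 0 fun x => b.elim 0 fun y => W x y

lemma extendByZero_keepIf (W : S → S → ℝ) (b c : Bool) (x y : S) :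
    extendByZero W (keepIf b x) (keepIf c y) = if b ∧ c then W x y else 0 := by
  cases b <;> cases c <;> rfl

variable [MeasurableSpace S]

lemma measurable_extendByZero {W : S → S → ℝ} (hW : Measurable (uncurry W)) :
    Measurable (uncurry (extendByZero W)) := by
  rcases isEmpty_or_nonempty S with hS | ⟨⟨s₀⟩⟩
  · have : Subsingleton (Option S) := Option.subsingleton_iff_isEmpty.2 hS
    exact Subsingleton.measurable
  have hite : uncurry (extendByZero W) = fun q =>
      if q.1.isSome ∧ q.2.isSome then W (q.1.getD s₀) (q.2.getD s₀) else 0 := by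
    funext ⟨a, b⟩; cases a <;> cases b <;> rfl
  have hgetD : Measurable fun o : Option S => o.getD s₀ :=
    Option.measurable_of_measurable_comp_some measurable_id
  rw [hite]
  refine Measurable.ite ?_ (hW.comp ((hgetD.comp measurable_fst).prodMk
    (hgetD.comp measurable_snd))) measurable_const
  exact (Option.measurableSet_isSome.preimage measurable_fst).inter
    (Option.measurableSet_isSome.preimage measurable_snd)

lemma measurePreserving_keepIf (μ : Measure S) [IsProbabilityMeasure μ] (p : I) :
    MeasurePreserving (fun z : Bool × S => keepIf z.1 z.2) (Ber(true, false, p).prod μ)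
      (ENNReal.ofReal p • μ.map some + ENNReal.ofReal (1 - p) • Measure.dirac none) := by
  have hmeas : Measurable fun z : Bool × S => keepIf z.1 z.2 :=
    measurable_from_prod_countable_right fun b => by
      cases b
      exacts [measurable_const, Option.measurable_some]
  refine ⟨hmeas, ?_⟩
  rw [bernoulliMeasure_def, Measure.add_prod, Measure.prod_smul_left, Measure.prod_smul_left,
    Measure.dirac_prod, Measure.dirac_prod, Measure.map_add _ _ hmeas, Measure.map_smul,
    Measure.map_smul, Measure.map_map hmeas measurable_prodMk_left,
    Measure.map_map hmeas measurable_prodMk_left]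
  have hcoe (q : I) : ENNReal.ofReal q = toNNReal q := ENNReal.ofReal_eq_coe_nnreal q.2.1
  have hkeep : ((fun z : Bool × S => keepIf z.1 z.2) ∘ Prod.mk false) = fun _ => none := rfl
  rw [← coe_symm_eq, hcoe, hcoe, Measure.coe_nnreal_smul, Measure.coe_nnreal_smul, hkeep,
    Measure.map_const, measure_univ, one_smul]
  rfl

end Thinning

lemma MeasureTheory.MeasurePreserving.pi_prod {ι α β γ : Type*} [Fintype ι] [MeasurableSpace α]
    [MeasurableSpace β] [MeasurableSpace γ] {μ : Measure α} {ν : Measure β} {ρ : Measure γ}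
    [SigmaFinite μ] [SigmaFinite ν] [SigmaFinite ρ] {f : α × β → γ}
    (hf : MeasurePreserving f (μ.prod ν) ρ) :
    MeasurePreserving (fun z : (ι → α) × (ι → β) => fun i => f (z.1 i, z.2 i))
      ((Measure.pi fun _ => μ).prod (Measure.pi fun _ => ν)) (Measure.pi fun _ => ρ) :=
  (measurePreserving_pi _ _ fun _ => hf).comp
    (measurePreserving_arrowProdEquivProdArrow α β ι _ _).symm

lemma MeasureTheory.MeasurePreserving.integral_comp_of_aestronglyMeasurable {α β E : Type*}
    [MeasurableSpace α] [MeasurableSpace β] [NormedAddCommGroup E] [NormedSpace ℝ E]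
    {μ : Measure α} {ν : Measure β} {f : α → β} (hf : MeasurePreserving f μ ν) {g : β → E}
    (hg : AEStronglyMeasurable g ν) :
    ∫ x, g (f x) ∂μ = ∫ y, g y ∂ν := by
  rw [← hf.map_eq] at hg ⊢
  exact (integral_map hf.measurable.aemeasurable hg).symm

lemma integral_pi_prod_finset {ι α : Type*} [Fintype ι] [MeasurableSpace α] (ν : Measure α)
    [IsProbabilityMeasure ν] (g : α → ℝ) (T : Finset ι) :
    ∫ x, ∏ i ∈ T, g (x i) ∂(Measure.pi fun _ => ν) = (∫ a, g a ∂ν) ^ T.card := by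
  classical
  have hfactor (x : ι → α) :
      ∏ i ∈ T, g (x i) = ∏ i, (if i ∈ T then g else fun _ => 1) (x i) := by
    simp only [ite_apply, prod_ite_mem, univ_inter]
  simp only [hfactor, integral_fintype_prod_eq_prod, apply_ite (fun f : α → ℝ => ∫ a, f a ∂ν),
    integral_const, probReal_univ, one_smul, prod_ite_mem, univ_inter, prod_const]

lemma integral_toNat_bernoulliMeasure (p : I) :
    ∫ b, (b.toNat : ℝ) ∂Ber(true, false, p) = p := by
  simp [integral_bernoulliMeasure]

section HomProduct

variable {ι X : Type*} [Fintype ι] (Q : ι → ι → Prop) [DecidableRel Q]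

def homProduct (W : X → X → ℝ) (x : ι → X) : ℝ :=
  ∏ q ∈ univ.filter (fun q : ι × ι => Q q.1 q.2), W (x q.1) (x q.2)

def comparableElements : Finset ι :=
  univ.filter fun i => ∃ j, Q i j ∨ Q j i

lemma measurable_homProduct [MeasurableSpace X] {W : X → X → ℝ} (hW : Measurable (uncurry W)) :
    Measurable (homProduct Q W) :=
  Finset.measurable_prod _ fun q _ => hW.comp (f := fun x : ι → X => (x q.1, x q.2)) (by fun_prop)

lemma homProduct_extendByZero_keepIf {S : Type*} (W : S → S → ℝ) (b : ι → Bool) (y : ι → S) :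
    homProduct Q (extendByZero W) (fun i => keepIf (b i) (y i)) =
      (∏ i ∈ comparableElements Q, ((b i).toNat : ℝ)) * homProduct Q W y := by
  have mem_left {i j : ι} (h : Q i j) : i ∈ comparableElements Q :=
    mem_filter.2 ⟨mem_univ _, j, .inl h⟩
  have mem_right {i j : ι} (h : Q i j) : j ∈ comparableElements Q :=
    mem_filter.2 ⟨mem_univ _, i, .inr h⟩
  by_cases hb : ∀ i ∈ comparableElements Q, b i = true
  · rw [prod_eq_one fun i hi => by simp [hb i hi], one_mul]
    refine prod_congr rfl fun q hq => ?_
    have hQ : Q q.1 q.2 := (mem_filter.1 hq).2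
    rw [extendByZero_keepIf, if_pos ⟨hb _ (mem_left hQ), hb _ (mem_right hQ)⟩]
  · obtain ⟨i, hi, hbi⟩ : ∃ i ∈ comparableElements Q, b i = false := by simpa using hb
    rw [prod_eq_zero hi (by simp [hbi]), zero_mul]
    obtain ⟨j, hij | hji⟩ := (mem_filter.1 hi).2
    · exact prod_eq_zero (mem_filter.2 ⟨mem_univ (i, j), hij⟩) (by simp [extendByZero_keepIf, hbi])
    · exact prod_eq_zero (mem_filter.2 ⟨mem_univ (j, i), hji⟩) (by simp [extendByZero_keepIf, hbi])

end HomProduct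

theorem thinned_kernel_homomorphism_density_general {S : Type*} [MeasurableSpace S]
    (μ : Measure S) [IsProbabilityMeasure μ]
    (W : S → S → ℝ) (hWmeas : Measurable fun q : S × S => W q.1 q.2)
    (p : ℝ) (hp : p ∈ Set.Icc (0 : ℝ) 1)
    (μp : Measure (Option S))
    (hμp : μp = ENNReal.ofReal p • μ.map Option.some +
      ENNReal.ofReal (1 - p) • Measure.dirac (none : Option S))
    (Wstar : Option S → Option S → ℝ)
    (hWstar : ∀ a b : Option S,
      Wstar a b = a.elim 0 fun x => b.elim 0 fun y => W x y)
    (k : ℕ) (Q : Fin k → Fin k → Prop) [DecidableRel Q] :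
    ∫ x : Fin k → Option S,
        ∏ q ∈ Finset.univ.filter (fun q : Fin k × Fin k => Q q.1 q.2),
          Wstar (x q.1) (x q.2) ∂(Measure.pi fun _ => μp) =
      p ^ (Finset.univ.filter
            (fun i : Fin k => ∃ j : Fin k, Q i j ∨ Q j i)).card *
        ∫ x : Fin k → S,
          ∏ q ∈ Finset.univ.filter (fun q : Fin k × Fin k => Q q.1 q.2),
            W (x q.1) (x q.2) ∂(Measure.pi fun _ => μ) := by
  obtain rfl : Wstar = extendByZero W := funext₂ hWstar
  have hthin := measurePreserving_keepIf μ ⟨p, hp⟩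
  rw [← hμp] at hthin
  have : IsProbabilityMeasure μp :=
    hthin.map_eq ▸ Measure.isProbabilityMeasure_map hthin.measurable.aemeasurable
  have hT : univ.filter (fun i : Fin k => ∃ j, Q i j ∨ Q j i) = comparableElements Q := by
    ext; simp [comparableElements]
  rw [hT]
  calc ∫ x, homProduct Q (extendByZero W) x ∂(Measure.pi fun _ => μp)
      = ∫ z : (Fin k → Bool) × (Fin k → S), (∏ i ∈ comparableElements Q, ((z.1 i).toNat : ℝ)) *
          homProduct Q W z.2 ∂((Measure.pi fun _ => Ber(true, false, ⟨p, hp⟩)).prod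
            (Measure.pi fun _ => μ)) := by
        simp only [← homProduct_extendByZero_keepIf]
        exact (hthin.pi_prod.integral_comp_of_aestronglyMeasurable
          (measurable_homProduct Q (measurable_extendByZero hWmeas)).aestronglyMeasurable).symm
    _ = p ^ (comparableElements Q).card * ∫ x, homProduct Q W x ∂(Measure.pi fun _ => μ) := by
        rw [integral_prod_mul
            (fun b : Fin k → Bool => ∏ i ∈ comparableElements Q, ((b i).toNat : ℝ)),
          integral_pi_prod_finset _ (fun b : Bool => (b.toNat : ℝ)),
          integral_toNat_bernoulliMeasure]

/-- Thinning a kernel. Extend an ordered probability space `S`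
by a point `*` (here `none : Option S`) of mass `1 - p`, scaling `μ` by `p`,
with `*` incomparable to everything and `W` extended by `0`. Then for every
finite poset `Q` on `{1,…,k}`, the homomorphism integral for the extended
kernel equals `p^{n(Q)}` times the original one, where `n(Q)` is the number
of elements of `Q` comparable to at least one other element. -/
theorem thinned_kernel_homomorphism_density {S : Type*} [MeasurableSpace S]
    (μ : Measure S) [IsProbabilityMeasure μ]
    (r : S → S → Prop) (hirr : Irreflexive r) (htrans : Transitive r)
    (hrmeas : MeasurableSet {p : S × S | r p.1 p.2})
    (W : S → S → ℝ) (hWmeas : Measurable fun q : S × S => W q.1 q.2)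
    (hW01 : ∀ x y, W x y ∈ Set.Icc (0 : ℝ) 1)
    (hW1 : ∀ x y, 0 < W x y → r x y)
    (hW2 : ∀ x y z, 0 < W x y → 0 < W y z → W x z = 1)
    (p : ℝ) (hp : p ∈ Set.Icc (0 : ℝ) 1)
    (μp : Measure (Option S))
    (hμp : μp = ENNReal.ofReal p • μ.map Option.some +
      ENNReal.ofReal (1 - p) • Measure.dirac (none : Option S))
    (Wstar : Option S → Option S → ℝ)
    (hWstar : ∀ a b : Option S,
      Wstar a b = a.elim 0 fun x => b.elim 0 fun y => W x y)
    (k : ℕ) (Q : Fin k → Fin k → Prop) [DecidableRel Q]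
    (hQirr : Irreflexive Q) (hQtrans : Transitive Q) :
    ∫ x : Fin k → Option S,
        ∏ q ∈ Finset.univ.filter (fun q : Fin k × Fin k => Q q.1 q.2),
          Wstar (x q.1) (x q.2) ∂(Measure.pi fun _ => μp) =
      p ^ (Finset.univ.filter
            (fun i : Fin k => ∃ j : Fin k, Q i j ∨ Q j i)).card *
        ∫ x : Fin k → S,
          ∏ q ∈ Finset.univ.filter (fun q : Fin k × Fin k => Q q.1 q.2),
            W (x q.1) (x q.2) ∂(Measure.pi fun _ => μ) :=
  thinned_kernel_homomorphism_density_general μ W hWmeas p hp μp hμp Wstar hWstar k Q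
end
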